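/- Let σ be a stabilized-interval-free permutation of [n] (n ≥ 2), and let σ' ∈ S_{[n-1]} be obtained by deleting n from its cycle (σ'(j) = σ(j) if σ(j) ≠ n, and σ'(σ⁻¹(n)) = σ(n), interpreted on [n-1]). If σ' is not SIF on [n-1], then there is exactly one maximal proper nonempty subinterval of [n-1] stabilized by σ'. -/

import Mathlib

/-
Write `j₀ = σ⁻¹(n)`. If a proper interval `I ⊆ [n-1]` stabilized by `σ'` avoided `j₀`, then `σ`
would agree with `σ'` on `I` and stabilize it; so every such interval contains `j₀`. If it
contained `n-1`, say `I = [a, n-1]`, then `σ` would stabilize `[a, n]`, since `σ(j₀) = n` and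
`σ(n) = σ'(j₀) ∈ I`. Hence the union of two such intervals is again one of them, and a finite
union-closed family has exactly one maximal member.
-/

def Stab {n : ℕ} (σ : Equiv.Perm (Fin n)) (S : Finset (Fin n)) : Prop :=
  S.image σ = S

def SIF {n : ℕ} (σ : Equiv.Perm (Fin n)) : Prop :=
  ∀ a b : Fin n, (Finset.Icc a b).Nonempty → Finset.Icc a b ≠ Finset.univ →
    ¬ Stab σ (Finset.Icc a b)

/-- `σ'` is obtained from `σ` (a permutation of `[n]`, modeled as `Fin (n+1)`) by deleting the
largest element `n` from its cycle: `σ'(j) = σ(j)` when `σ(j) ≠ n`, and `σ'(σ⁻¹(n)) = σ(n)`. -/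
def DeleteTop {n : ℕ} (σ : Equiv.Perm (Fin (n + 1))) (σ' : Equiv.Perm (Fin n)) : Prop :=
  ∀ j : Fin n, (σ' j : ℕ) =
    if σ (Fin.castSucc j) = Fin.last n then (σ (Fin.last n) : ℕ) else (σ (Fin.castSucc j) : ℕ)

open Finset Fin

theorem SupClosed.existsUnique_maximal {α : Type*} [SemilatticeSup α] {s : Set α}
    (hs : SupClosed s) (hfin : s.Finite) (hne : s.Nonempty) :
    ∃! a, Maximal (· ∈ s) a := by
  obtain ⟨a, ha⟩ := hfin.exists_maximal hne
  have hgreatest : IsGreatest s a :=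
    ⟨ha.prop, fun b hb => sup_eq_left.1 (ha.eq_of_le (hs ha.prop hb) le_sup_left).symm⟩
  exact ⟨a, ha, fun b hb => hgreatest.maximal_iff.1 hb⟩

theorem Finset.Icc_union_Icc' {α : Type*} [LinearOrder α] [LocallyFiniteOrder α]
    {a b c d : α} (h₁ : c ≤ b) (h₂ : a ≤ d) :
    Icc a b ∪ Icc c d = Icc (min a c) (max b d) :=
  coe_injective <| by push_cast; exact Set.Icc_union_Icc' h₁ h₂

section Stab

variable {n : ℕ} {σ : Equiv.Perm (Fin n)} {S T : Finset (Fin n)}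

theorem stab_iff_forall_mem : Stab σ S ↔ ∀ x ∈ S, σ x ∈ S := by
  refine ⟨fun h x hx => h ▸ mem_image_of_mem σ hx, fun h => ?_⟩
  exact eq_of_subset_of_card_le (image_subset_iff.2 h) (card_image_of_injective S σ.injective).ge

theorem Stab.union (hS : Stab σ S) (hT : Stab σ T) : Stab σ (S ∪ T) := by
  rw [Stab, image_union, hS, hT]

def StabInterval (σ : Equiv.Perm (Fin n)) (S : Finset (Fin n)) : Prop :=
  (∃ a b : Fin n, S = Icc a b) ∧ S.Nonempty ∧ S ≠ univ ∧ Stab σ S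

theorem sif_iff_forall_not_stabInterval : SIF σ ↔ ∀ S, ¬ StabInterval σ S := by
  simp only [SIF, StabInterval, not_and]
  exact ⟨fun h S ⟨a, b, hS⟩ => hS ▸ h a b, fun h a b => h _ ⟨a, b, rfl⟩⟩

end Stab

namespace DeleteTop

section

variable {n : ℕ} {σ : Equiv.Perm (Fin (n + 1))} {σ' : Equiv.Perm (Fin n)} {S : Finset (Fin n)}
  {j : Fin n}

theorem apply_castSucc_of_ne (hdel : DeleteTop σ σ') (hj : σ j.castSucc ≠ last n) :
    σ j.castSucc = (σ' j).castSucc :=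
  Fin.ext <| by rw [val_castSucc, hdel j, if_neg hj]

theorem apply_last_of_eq (hdel : DeleteTop σ σ') (hj : σ j.castSucc = last n) :
    σ (last n) = (σ' j).castSucc :=
  Fin.ext <| by rw [val_castSucc, hdel j, if_pos hj]

theorem stab_image_castSucc (hdel : DeleteTop σ σ') (hS : Stab σ' S)
    (h : ∀ j ∈ S, σ j.castSucc ≠ last n) : Stab σ (S.image castSucc) := by
  rw [stab_iff_forall_mem] at hS ⊢
  simp only [mem_image, forall_exists_index, and_imp, forall_apply_eq_imp_iff₂]
  exact fun j hj => ⟨σ' j, hS j hj, (hdel.apply_castSucc_of_ne (h j hj)).symm⟩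

theorem stab_insert_last_image_castSucc (hdel : DeleteTop σ σ') (hS : Stab σ' S) (hj : j ∈ S)
    (hjlast : σ j.castSucc = last n) : Stab σ (insert (last n) (S.image castSucc)) := by
  rw [stab_iff_forall_mem] at hS ⊢
  simp only [mem_insert, mem_image, forall_eq_or_imp, forall_exists_index, and_imp,
    forall_apply_eq_imp_iff₂]
  refine ⟨.inr ⟨σ' j, hS j hj, (hdel.apply_last_of_eq hjlast).symm⟩, fun i hi => ?_⟩
  by_cases hi' : σ i.castSucc = last n
  · exact .inl hi'
  · exact .inr ⟨σ' i, hS i hi, (hdel.apply_castSucc_of_ne hi').symm⟩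

theorem exists_mem_apply_castSucc_eq_last (hdel : DeleteTop σ σ') (hσ : SIF σ)
    (hS : StabInterval σ' S) : ∃ j ∈ S, σ j.castSucc = last n := by
  obtain ⟨⟨a, b, rfl⟩, hne, -, hstab⟩ := hS
  by_contra! h
  refine sif_iff_forall_not_stabInterval.1 hσ _
    ⟨⟨a.castSucc, b.castSucc, finsetImage_castSucc_Icc a b⟩, hne.image _, ?_,
      hdel.stab_image_castSucc hstab h⟩
  intro huniv
  obtain ⟨i, -, hi⟩ := mem_image.1 (huniv ▸ mem_univ (last n))
  exact (castSucc_lt_last i).ne hi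

end

section

variable {n : ℕ} {σ : Equiv.Perm (Fin (n + 2))} {σ' : Equiv.Perm (Fin (n + 1))}
  {S T : Finset (Fin (n + 1))}

theorem last_notMem (hdel : DeleteTop σ σ') (hσ : SIF σ) (hS : StabInterval σ' S) :
    last n ∉ S := by
  intro hlast
  obtain ⟨j, hj, hjlast⟩ := hdel.exists_mem_apply_castSucc_eq_last hσ hS
  obtain ⟨⟨a, b, rfl⟩, -, hproper, hstab⟩ := hS
  obtain rfl : b = last n := (mem_Icc.1 hlast).2.antisymm' (le_last b)
  have hIcc :
      insert (last (n + 1)) ((Icc a (last n)).image castSucc) = Icc a.castSucc (last _) := by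
    rw [← top_eq_last n, Icc_top, finsetImage_castSucc_Ici, Ico_insert_right (le_last _)]
  refine sif_iff_forall_not_stabInterval.1 hσ _
    ⟨⟨_, _, hIcc⟩, ⟨_, mem_insert_self _ _⟩, ?_,
      hdel.stab_insert_last_image_castSucc hstab hj hjlast⟩
  intro huniv
  have ha : a.castSucc ≤ 0 := (mem_Icc.1 (hIcc ▸ huniv ▸ mem_univ 0)).1
  obtain rfl : a = 0 := castSucc_eq_zero_iff.1 (Fin.le_zero_iff.1 ha)
  exact hproper (eq_univ_of_forall fun x => mem_Icc.2 ⟨zero_le x, le_last x⟩)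

theorem stabInterval_union (hdel : DeleteTop σ σ') (hσ : SIF σ) (hS : StabInterval σ' S)
    (hT : StabInterval σ' T) : StabInterval σ' (S ∪ T) := by
  obtain ⟨i, hi, hilast⟩ := hdel.exists_mem_apply_castSucc_eq_last hσ hS
  obtain ⟨j, hj, hjlast⟩ := hdel.exists_mem_apply_castSucc_eq_last hσ hT
  obtain rfl : i = j := castSucc_injective _ (σ.injective (hilast.trans hjlast.symm))
  have hlast : last n ∉ S ∪ T := fun h =>
    (mem_union.1 h).elim (hdel.last_notMem hσ hS) (hdel.last_notMem hσ hT)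
  obtain ⟨⟨a, b, rfl⟩, hSne, -, hSstab⟩ := hS
  obtain ⟨⟨c, d, rfl⟩, -, -, hTstab⟩ := hT
  rw [mem_Icc] at hi hj
  refine ⟨⟨_, _, Icc_union_Icc' (hj.1.trans hi.2) (hi.1.trans hj.2)⟩, hSne.mono subset_union_left,
    fun huniv => hlast (huniv ▸ mem_univ _), hSstab.union hTstab⟩

end

end DeleteTop

/-- If `σ` is SIF on `[n]` (with `n ≥ 2`) and deleting `n` from its cycle yields `σ'` on
`[n-1]` which fails to be SIF, then there is exactly one maximal proper nonempty subinterval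
of `[n-1]` stabilized by `σ'`. -/
theorem stmt6 (n : ℕ) (hn : 1 ≤ n) (σ : Equiv.Perm (Fin (n + 1))) (hσ : SIF σ)
    (σ' : Equiv.Perm (Fin n)) (hdel : DeleteTop σ σ') (hnot : ¬ SIF σ') :
    ∃! S : Finset (Fin n),
      (∃ a b : Fin n, S = Finset.Icc a b) ∧ S.Nonempty ∧ S ≠ Finset.univ ∧ Stab σ' S ∧
      ∀ T : Finset (Fin n),
        (∃ a b : Fin n, T = Finset.Icc a b) → T.Nonempty → T ≠ Finset.univ → Stab σ' T →
          S ⊆ T → S = T := by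
  obtain ⟨m, rfl⟩ := Nat.exists_eq_add_of_le' hn
  have hsup : SupClosed {S | StabInterval σ' S} := fun _ hS _ hT =>
    hdel.stabInterval_union hσ hS hT
  have hne : {S | StabInterval σ' S}.Nonempty :=
    not_forall_not.1 fun h => hnot (sif_iff_forall_not_stabInterval.2 h)
  simpa only [maximal_iff, Set.mem_ofPred_eq, StabInterval, and_imp, and_assoc]
    using hsup.existsUnique_maximal (Set.toFinite _) hne
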